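/- arXiv:1503.05407 — 6 statements merged into one kernel-verified Lean document; each statement's English description precedes it below -/
import Mathlib

section
/- Let α ∈ (0,1], M > 0, r > 0 and let C₀, C₁ > 0. Define C_k for k ≥ 2 by α²(k+2)(k+1)C_{k+2} = (M/r^{kα}) ∑_{j=0}^{k} [α(j+1)C_{j+1} + C_j] r^{jα} + M C_{k+1} r^{α} for k ≥ 0. Then for every real t with 0 < t < r, the series ∑_{k=0}^{∞} C_k t^{kα} converges. -/
/-!
Write `x = r^α` and `D k = C k * x^k`, so that `C k * t^(kα) = D k * q^k` with `q = (t/r)^α < 1`.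
After multiplying the recurrence by `x^(k+2) / α²`, the sequence `D` satisfies
`(k+2)(k+1) D(k+2) ≤ K (∑_{j≤k} ((j+1) D(j+1) + D j) + D(k+1))` for a constant `K`.
The left side carries the factor `(k+2)(k+1)` while the right side only grows like `k` times a
geometric sum, so once `k` is large an estimate `D j ≤ A ρ^j` for `j ≤ k+1` propagates to
`j = k+2`, for any `ρ > 1`. Taking `ρ q < 1`, the series is dominated by a geometric one.
-/

open Finset

def RecursiveBound (K : ℝ) (D : ℕ → ℝ) : Prop :=
  ∀ k : ℕ, ((k : ℝ) + 2) * ((k : ℝ) + 1) * D (k + 2)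
    ≤ K * (∑ j ∈ range (k + 1), (((j : ℝ) + 1) * D (j + 1) + D j) + D (k + 1))

namespace RecursiveBound

variable {K : ℝ} {D : ℕ → ℝ}

lemma sum_le_of_le_mul_pow {ρ A : ℝ} (hρ : 1 < ρ) (hA : 0 ≤ A) {k : ℕ}
    (hD : ∀ j ≤ k + 1, D j ≤ A * ρ ^ j) :
    (ρ - 1) * ∑ j ∈ range (k + 1), (((j : ℝ) + 1) * D (j + 1) + D j)
      ≤ ((k : ℝ) + 1) * (ρ + 1) * A * ρ ^ (k + 1) := by
  have hterm : ∀ j ∈ range (k + 1),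
      ((j : ℝ) + 1) * D (j + 1) + D j ≤ ((k : ℝ) + 1) * (ρ + 1) * A * ρ ^ j := by
    intro j hj
    have hjk : j ≤ k := Nat.lt_succ_iff.mp (mem_range.mp hj)
    have hρj : 0 ≤ A * ρ ^ j := mul_nonneg hA (by positivity)
    have h1 : D (j + 1) ≤ A * ρ ^ j * ρ := by
      rw [mul_assoc, ← pow_succ]; exact hD _ (by omega)
    have h0 : D j ≤ A * ρ ^ j := hD _ (by omega)
    have hρ' : 0 ≤ A * ρ ^ j * ρ := by positivity
    nlinarith [mul_le_mul_of_nonneg_left h1 (by positivity : (0:ℝ) ≤ j + 1),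
      mul_le_mul_of_nonneg_right (Nat.cast_le.mpr hjk : (j : ℝ) ≤ k) hρ',
      mul_nonneg (Nat.cast_nonneg k : (0:ℝ) ≤ k) hρj]
  have hgeom := geom_sum_mul ρ (k + 1)
  calc (ρ - 1) * ∑ j ∈ range (k + 1), (((j : ℝ) + 1) * D (j + 1) + D j)
      ≤ (ρ - 1) * ∑ j ∈ range (k + 1), ((k : ℝ) + 1) * (ρ + 1) * A * ρ ^ j := by
        gcongr with j hj
        exact hterm j hj
    _ = ((k : ℝ) + 1) * (ρ + 1) * A * (ρ ^ (k + 1) - 1) := by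
        rw [← mul_sum, ← hgeom]; ring
    _ ≤ ((k : ℝ) + 1) * (ρ + 1) * A * ρ ^ (k + 1) := by
        have : 0 ≤ ((k : ℝ) + 1) * (ρ + 1) * A := by positivity
        nlinarith

lemma le_mul_pow_add_two (h : RecursiveBound K D) (hK : 0 ≤ K) {ρ A : ℝ} (hρ : 1 < ρ)
    (hA : 0 ≤ A) {k : ℕ} (hk : 2 * K ≤ (ρ - 1) * ((k : ℝ) + 2))
    (hD : ∀ j ≤ k + 1, D j ≤ A * ρ ^ j) : D (k + 2) ≤ A * ρ ^ (k + 2) := by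
  have hS := sum_le_of_le_mul_pow hρ hA hD
  have hlast := hD (k + 1) le_rfl
  have hpos : 0 < (ρ - 1) * (((k : ℝ) + 2) * ((k : ℝ) + 1)) := by
    have : (0 : ℝ) < ρ - 1 := by linarith
    positivity
  have hB : 0 ≤ A * ρ ^ (k + 1) := by positivity
  refine le_of_mul_le_mul_left ?_ hpos
  calc (ρ - 1) * (((k : ℝ) + 2) * ((k : ℝ) + 1)) * D (k + 2)
      ≤ K * ((ρ - 1) * ∑ j ∈ range (k + 1), (((j : ℝ) + 1) * D (j + 1) + D j)
          + (ρ - 1) * D (k + 1)) := by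
        have := mul_le_mul_of_nonneg_left (h k) (by linarith : (0 : ℝ) ≤ ρ - 1)
        linarith
    _ ≤ K * (((k : ℝ) + 1) * (ρ + 1) * A * ρ ^ (k + 1) + (ρ - 1) * (A * ρ ^ (k + 1))) := by
        gcongr
    _ ≤ 2 * K * (((k : ℝ) + 1) * ρ * (A * ρ ^ (k + 1))) := by
        have : 0 ≤ K * (k * (A * ρ ^ (k + 1))) := by positivity
        nlinarith
    _ ≤ (ρ - 1) * ((k : ℝ) + 2) * (((k : ℝ) + 1) * ρ * (A * ρ ^ (k + 1))) := by
        gcongr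
    _ = (ρ - 1) * (((k : ℝ) + 2) * ((k : ℝ) + 1)) * (A * ρ ^ (k + 2)) := by ring

lemma exists_le_mul_pow (h : RecursiveBound K D) (hK : 0 ≤ K) (hD : ∀ k, 0 ≤ D k)
    {ρ : ℝ} (hρ : 1 < ρ) : ∃ A, ∀ k, D k ≤ A * ρ ^ k := by
  obtain ⟨N, hN⟩ := exists_nat_ge (2 * K / (ρ - 1))
  have hρ1 : 0 < ρ - 1 := by linarith
  set A := ∑ i ∈ range (N + 2), D i / ρ ^ i
  have hA : 0 ≤ A := sum_nonneg fun i _ => div_nonneg (hD i) (by positivity)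
  refine ⟨A, fun k => ?_⟩
  induction k using Nat.strong_induction_on with
  | _ k ih =>
    rcases lt_or_ge k (N + 2) with hk | hk
    · have := single_le_sum (f := fun i => D i / ρ ^ i)
        (fun i _ => div_nonneg (hD i) (by positivity)) (mem_range.mpr hk)
      rwa [div_le_iff₀ (by positivity)] at this
    · obtain ⟨m, rfl⟩ : ∃ m, k = m + 2 := ⟨k - 2, by omega⟩
      refine h.le_mul_pow_add_two hK hρ hA ?_ fun j hj => ih j (by omega)
      have : (N : ℝ) ≤ m := by exact_mod_cast (by omega : N ≤ m)
      rw [div_le_iff₀ hρ1] at hN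
      nlinarith

end RecursiveBound

lemma summable_mul_pow_of_forall_exists_le_mul_pow {D : ℕ → ℝ} (hD : ∀ k, 0 ≤ D k)
    (hgrowth : ∀ ρ : ℝ, 1 < ρ → ∃ A, ∀ k, D k ≤ A * ρ ^ k) {q : ℝ} (hq0 : 0 ≤ q) (hq1 : q < 1) :
    Summable fun k => D k * q ^ k := by
  obtain ⟨A, hA⟩ := hgrowth (2 / (1 + q)) (by rw [lt_div_iff₀ (by linarith)]; linarith)
  have hρq : 2 / (1 + q) * q < 1 := by
    rw [div_mul_eq_mul_div, div_lt_one (by linarith)]; linarith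
  refine Summable.of_nonneg_of_le (fun k => mul_nonneg (hD k) (pow_nonneg hq0 k)) (fun k => ?_)
    ((summable_geometric_of_lt_one (by positivity) hρq).mul_left A)
  calc D k * q ^ k ≤ A * (2 / (1 + q)) ^ k * q ^ k := by gcongr; exact hA k
    _ = A * (2 / (1 + q) * q) ^ k := by rw [mul_pow, mul_assoc]

def MajorantRecurrence (α M x : ℝ) (C : ℕ → ℝ) : Prop :=
  ∀ k : ℕ, α ^ 2 * ((k : ℝ) + 2) * ((k : ℝ) + 1) * C (k + 2)
    = M / x ^ k * ∑ j ∈ range (k + 1), (α * ((j : ℝ) + 1) * C (j + 1) + C j) * x ^ j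
      + M * C (k + 1) * x

namespace MajorantRecurrence

variable {α M x : ℝ} {C : ℕ → ℝ}

lemma nonneg (h : MajorantRecurrence α M x C) (hα : 0 < α) (hM : 0 ≤ M) (hx : 0 < x)
    (hC0 : 0 ≤ C 0) (hC1 : 0 ≤ C 1) (k : ℕ) : 0 ≤ C k := by
  induction k using Nat.strong_induction_on with
  | _ k ih =>
    match k, ih with
    | 0, _ => exact hC0
    | 1, _ => exact hC1
    | k + 2, ih =>
      have hsum : 0 ≤ ∑ j ∈ range (k + 1), (α * ((j : ℝ) + 1) * C (j + 1) + C j) * x ^ j :=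
        sum_nonneg fun j hj => by
          have := mem_range.mp hj
          have := ih j (by omega)
          have := ih (j + 1) (by omega)
          positivity
      have hlhs : 0 ≤ α ^ 2 * ((k : ℝ) + 2) * ((k : ℝ) + 1) * C (k + 2) := by
        rw [h k]
        have := ih (k + 1) (by omega)
        positivity
      exact nonneg_of_mul_nonneg_right hlhs (by positivity)

lemma scaled_eq (h : MajorantRecurrence α M x C) (hα : 0 < α) (hx : 0 < x) (k : ℕ) :
    ((k : ℝ) + 2) * ((k : ℝ) + 1) * (C (k + 2) * x ^ (k + 2))
      = ∑ j ∈ range (k + 1), (M * x / α * (((j : ℝ) + 1) * (C (j + 1) * x ^ (j + 1)))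
          + M * x ^ 2 / α ^ 2 * (C j * x ^ j))
        + M * x ^ 2 / α ^ 2 * (C (k + 1) * x ^ (k + 1)) := by
  have hsum : ∑ j ∈ range (k + 1), (M * x / α * (((j : ℝ) + 1) * (C (j + 1) * x ^ (j + 1)))
        + M * x ^ 2 / α ^ 2 * (C j * x ^ j))
      = M * x ^ 2 / α ^ 2 *
          ∑ j ∈ range (k + 1), (α * ((j : ℝ) + 1) * C (j + 1) + C j) * x ^ j := by
    rw [mul_sum]
    refine sum_congr rfl fun j _ => ?_
    field_simp
    ring
  rw [hsum]
  have hxk : x ^ k ≠ 0 := by positivity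
  apply mul_left_cancel₀ (by positivity : α ^ 2 ≠ 0)
  calc α ^ 2 * (((k : ℝ) + 2) * ((k : ℝ) + 1) * (C (k + 2) * x ^ (k + 2)))
      = α ^ 2 * ((k : ℝ) + 2) * ((k : ℝ) + 1) * C (k + 2) * x ^ k * x ^ 2 := by ring
    _ = _ := by rw [h k]; field_simp; ring

lemma recursiveBound (h : MajorantRecurrence α M x C) (hα : 0 < α) (hM : 0 ≤ M) (hx : 0 < x)
    (hC : ∀ k, 0 ≤ C k) :
    RecursiveBound (M * x / α + M * x ^ 2 / α ^ 2) fun k => C k * x ^ k := by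
  intro k
  dsimp only
  rw [h.scaled_eq hα hx k, mul_add, mul_sum]
  have ha : 0 ≤ M * x / α := by positivity
  have hb : 0 ≤ M * x ^ 2 / α ^ 2 := by positivity
  have hD : ∀ j, 0 ≤ C j * x ^ j := fun j => mul_nonneg (hC j) (by positivity)
  refine add_le_add (sum_le_sum fun j _ => ?_)
    (mul_le_mul_of_nonneg_right (le_add_of_nonneg_left ha) (hD _))
  nlinarith [mul_nonneg hb (mul_nonneg (by positivity : (0 : ℝ) ≤ j + 1) (hD (j + 1))),
    mul_nonneg ha (hD j)]

end MajorantRecurrence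

theorem stmt_1 (α M r : ℝ) (hα : α ∈ Set.Ioc (0:ℝ) 1) (hM : 0 < M) (hr : 0 < r)
    (C : ℕ → ℝ) (hC0 : 0 < C 0) (hC1 : 0 < C 1)
    (hrec : ∀ k : ℕ, α ^ 2 * ((k : ℝ) + 2) * ((k : ℝ) + 1) * C (k + 2)
      = M / r ^ ((k : ℝ) * α) *
          ∑ j ∈ Finset.range (k + 1),
            (α * ((j : ℝ) + 1) * C (j + 1) + C j) * r ^ ((j : ℝ) * α)
        + M * C (k + 1) * r ^ α) :
    ∀ t : ℝ, 0 < t → t < r →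
      Summable (fun k : ℕ => C k * t ^ ((k : ℝ) * α)) := by
  intro t ht htr
  have hα0 := hα.1
  have hpow : ∀ s : ℝ, 0 ≤ s → ∀ k : ℕ, s ^ ((k : ℝ) * α) = (s ^ α) ^ k := fun s hs k => by
    rw [mul_comm, Real.rpow_mul_natCast hs]
  have hx : 0 < r ^ α := by positivity
  have hmaj : MajorantRecurrence α M (r ^ α) C := by
    intro k
    simpa only [hpow r hr.le] using hrec k
  have hC := hmaj.nonneg hα0 hM.le hx hC0.le hC1.le
  have hD : ∀ k, 0 ≤ C k * (r ^ α) ^ k := fun k => mul_nonneg (hC k) (by positivity)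
  have hq : t ^ α / r ^ α < 1 := (div_lt_one hx).2 (Real.rpow_lt_rpow ht.le htr hα0)
  have hsum := summable_mul_pow_of_forall_exists_le_mul_pow hD
    (fun ρ hρ => (hmaj.recursiveBound hα0 hM.le hx hC).exists_le_mul_pow (by positivity) hD hρ)
    (by positivity) hq
  refine hsum.congr fun k => ?_
  rw [hpow t ht.le, div_pow]
  field_simp
end

section
/- Let α ∈ (0,1], M > 0, r > 0, and let (p_k), (q_k) be real sequences with |p_k| ≤ M/r^{kα} and |q_k| ≤ M/r^{kα} for all k ≥ 0. Let c₀, c₁ ∈ ℝ and define c_k for k ≥ 2 by α²(k+2)(k+1)c_{k+2} = −∑_{j=0}^{k} [α(j+1) p_{k−j} c_{j+1} + q_{k−j} c_j]. Let C₀ = |c₀|, C₁ = |c₁| and define C_k for k ≥ 2 by α²(k+2)(k+1)C_{k+2} = (M/r^{kα}) ∑_{j=0}^{k} [α(j+1)C_{j+1} + C_j] r^{jα} + M C_{k+1} r^{α}. Then |c_k| ≤ C_k for all k ≥ 0. -/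
/-! Strong induction on `k`: each term of the convolution defining `c (k + 2)` is dominated,
via the Cauchy bounds on `p` and `q` and the induction hypothesis, by the corresponding term of
the majorant sum, whose extra summand `M * C (k + 1) * r ^ α` is nonnegative. -/

open Finset

lemma Real.rpow_natCast_sub_mul {r : ℝ} (hr : 0 < r) (α : ℝ) {j k : ℕ} (hjk : j ≤ k) :
    r ^ (((k - j : ℕ) : ℝ) * α) = r ^ ((k : ℝ) * α) / r ^ ((j : ℝ) * α) := by
  rw [Nat.cast_sub hjk, sub_mul, Real.rpow_sub hr]

lemma abs_mul_mul_add_mul_le {a u x v y B X Y : ℝ} (ha : 0 ≤ a) (hu : |u| ≤ B) (hv : |v| ≤ B)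
    (hx : |x| ≤ X) (hy : |y| ≤ Y) : |a * u * x + v * y| ≤ (a * X + Y) * B :=
  calc |a * u * x + v * y|
      ≤ a * |u| * |x| + |v| * |y| := by
        simpa only [abs_mul, abs_of_nonneg ha] using abs_add_le (a * u * x) (v * y)
    _ ≤ a * B * X + B * Y := by
        have hB : 0 ≤ B := (abs_nonneg u).trans hu
        gcongr
    _ = (a * X + Y) * B := by ring

lemma abs_sum_cauchy_convolution_le {α M r : ℝ} (hα : 0 ≤ α) (hr : 0 < r) {p q : ℕ → ℝ}
    (hp : ∀ k : ℕ, |p k| ≤ M / r ^ ((k : ℝ) * α))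
    (hq : ∀ k : ℕ, |q k| ≤ M / r ^ ((k : ℝ) * α))
    {c C : ℕ → ℝ} {k : ℕ} (hcC : ∀ j ≤ k + 1, |c j| ≤ C j) :
    |∑ j ∈ range (k + 1), (α * ((j : ℝ) + 1) * p (k - j) * c (j + 1) + q (k - j) * c j)|
      ≤ M / r ^ ((k : ℝ) * α) *
          ∑ j ∈ range (k + 1), (α * ((j : ℝ) + 1) * C (j + 1) + C j) * r ^ ((j : ℝ) * α) := by
  rw [mul_sum]
  refine (abs_sum_le_sum_abs _ _).trans (sum_le_sum fun j hj => ?_)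
  have hjk : j ≤ k := Nat.lt_succ_iff.mp (mem_range.mp hj)
  have hB : M / r ^ (((k - j : ℕ) : ℝ) * α) = M / r ^ ((k : ℝ) * α) * r ^ ((j : ℝ) * α) := by
    rw [Real.rpow_natCast_sub_mul hr α hjk, div_div_eq_mul_div, mul_div_right_comm]
  calc _ ≤ (α * ((j : ℝ) + 1) * C (j + 1) + C j) * (M / r ^ (((k - j : ℕ) : ℝ) * α)) :=
        abs_mul_mul_add_mul_le (by positivity) (hp _) (hq _) (hcC _ (by omega)) (hcC _ (by omega))
    _ = _ := by rw [hB]; ring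

theorem stmt_2 (α M r : ℝ) (hα : α ∈ Set.Ioc (0:ℝ) 1) (hM : 0 < M) (hr : 0 < r)
    (p q : ℕ → ℝ)
    (hp : ∀ k : ℕ, |p k| ≤ M / r ^ ((k : ℝ) * α))
    (hq : ∀ k : ℕ, |q k| ≤ M / r ^ ((k : ℝ) * α))
    (c : ℕ → ℝ)
    (hcrec : ∀ k : ℕ, α ^ 2 * ((k : ℝ) + 2) * ((k : ℝ) + 1) * c (k + 2)
      = -∑ j ∈ Finset.range (k + 1),
          (α * ((j : ℝ) + 1) * p (k - j) * c (j + 1) + q (k - j) * c j))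
    (C : ℕ → ℝ) (hC0 : C 0 = |c 0|) (hC1 : C 1 = |c 1|)
    (hCrec : ∀ k : ℕ, α ^ 2 * ((k : ℝ) + 2) * ((k : ℝ) + 1) * C (k + 2)
      = M / r ^ ((k : ℝ) * α) *
          ∑ j ∈ Finset.range (k + 1),
            (α * ((j : ℝ) + 1) * C (j + 1) + C j) * r ^ ((j : ℝ) * α)
        + M * C (k + 1) * r ^ α) :
    ∀ k : ℕ, |c k| ≤ C k := by
  have hα0 : 0 < α := hα.1
  intro k
  induction k using Nat.strong_induction_on with
  | _ k ih =>
  rcases k with _ | _ | k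
  · exact hC0.ge
  · exact hC1.ge
  have hd : 0 < α ^ 2 * ((k : ℝ) + 2) * ((k : ℝ) + 1) := by positivity
  have hsum := abs_sum_cauchy_convolution_le hα0.le hr hp hq (c := c) (C := C) (k := k)
    fun j hj => ih j (by omega)
  have hCk1 : 0 ≤ C (k + 1) := (abs_nonneg _).trans (ih (k + 1) (by omega))
  have hextra : 0 ≤ M * C (k + 1) * r ^ α := by positivity
  refine le_of_mul_le_mul_left ?_ hd
  calc α ^ 2 * ((k : ℝ) + 2) * ((k : ℝ) + 1) * |c (k + 2)|
      = |α ^ 2 * ((k : ℝ) + 2) * ((k : ℝ) + 1) * c (k + 2)| := by rw [abs_mul, abs_of_pos hd]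
    _ ≤ α ^ 2 * ((k : ℝ) + 2) * ((k : ℝ) + 1) * C (k + 2) := by
        rw [hcrec k, abs_neg, hCrec k]; linarith
end

section
/- Let α ∈ (0,1], x₀ ∈ ℝ, and let (p_k), (q_k) be real sequences such that ∑_{k=0}^{∞} p_k t^{kα} converges for 0 ≤ t < δ₁ and ∑_{k=0}^{∞} q_k t^{kα} converges for 0 ≤ t < δ₂, where δ₁, δ₂ > 0. Let c₀, c₁ ∈ ℝ and define c_k for k ≥ 2 by the recurrence α²(k+2)(k+1)c_{k+2} = −∑_{j=0}^{k} [α(j+1) p_{k−j} c_{j+1} + q_{k−j} c_j]. Then the series ∑_{k=0}^{∞} c_k (x − x₀)^{kα} converges for every x ∈ (x₀, x₀ + ρ), where ρ = min{δ₁, δ₂}. -/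
/-!
Writing `r = (x - x₀) ^ α`, the series are ordinary power series in `r`, so it suffices to show
that `∑ c k * r ^ k` converges whenever `∑ p k * s ^ k` and `∑ q k * s ^ k` do and `|r| < s`.
The terms `p k * s ^ k`, `q k * s ^ k` are bounded by some `M`. For any `v > 1 / s` the recurrence
then propagates a bound `|c k| ≤ K * v ^ k`: the right-hand side of the recurrence for `c (m + 2)`
is `O(m * v ^ m)`, while the left-hand side carries the factor `α² (m + 2) (m + 1)`, so once `m`
is large the bound for `c (m + 2)` follows from the bounds for smaller indices. Choosing
`1 / s < v < 1 / |r|` gives a geometric majorant.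
-/

open Finset

section Recurrence

variable {α M σ v K : ℝ} {p q c : ℕ → ℝ}

lemma abs_recurrence_term_le (hα : 0 < α) (hM : 0 ≤ M) (hσ : 0 ≤ σ) (hv : 0 < v) (hK : 0 ≤ K)
    (hp : ∀ k, |p k| ≤ M * σ ^ k) (hq : ∀ k, |q k| ≤ M * σ ^ k) {m j : ℕ} (hj : j ≤ m)
    (hc : ∀ i ≤ m + 1, |c i| ≤ K * v ^ i) :
    |α * ((j : ℝ) + 1) * p (m - j) * c (j + 1) + q (m - j) * c j|
      ≤ M * K * (α * v + 1) * ((m : ℝ) + 1) * v ^ m * (σ / v) ^ (m - j) := by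
  have hshift : σ ^ (m - j) * v ^ j = (σ / v) ^ (m - j) * v ^ m := by
    rw [div_pow, ← Nat.sub_add_cancel hj, pow_add, Nat.add_sub_cancel]
    field_simp
  have hjm : (j : ℝ) ≤ m := by exact_mod_cast hj
  calc |α * ((j : ℝ) + 1) * p (m - j) * c (j + 1) + q (m - j) * c j|
      ≤ α * ((j : ℝ) + 1) * |p (m - j)| * |c (j + 1)| + |q (m - j)| * |c j| := by
        refine (abs_add_le _ _).trans_eq ?_
        simp only [abs_mul, abs_of_pos hα, abs_of_nonneg (by positivity : (0 : ℝ) ≤ j + 1)]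
    _ ≤ α * ((j : ℝ) + 1) * (M * σ ^ (m - j)) * (K * v ^ (j + 1))
          + M * σ ^ (m - j) * (K * v ^ j) := by
        gcongr
        exacts [hp _, hc _ (by omega), hq _, hc _ (by omega)]
    _ = M * K * (α * ((j : ℝ) + 1) * v + 1) * v ^ m * (σ / v) ^ (m - j) := by
        linear_combination (M * K * (α * ((j : ℝ) + 1) * v + 1)) * hshift
    _ ≤ M * K * ((α * v + 1) * ((m : ℝ) + 1)) * v ^ m * (σ / v) ^ (m - j) := by
        gcongr
        nlinarith [mul_pos hα hv]
    _ = M * K * (α * v + 1) * ((m : ℝ) + 1) * v ^ m * (σ / v) ^ (m - j) := by ring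

lemma abs_sum_recurrence_le (hα : 0 < α) (hM : 0 ≤ M) (hσ : 0 ≤ σ) (hσv : σ < v) (hK : 0 ≤ K)
    (hp : ∀ k, |p k| ≤ M * σ ^ k) (hq : ∀ k, |q k| ≤ M * σ ^ k) {m : ℕ}
    (hc : ∀ i ≤ m + 1, |c i| ≤ K * v ^ i) :
    |∑ j ∈ range (m + 1), (α * ((j : ℝ) + 1) * p (m - j) * c (j + 1) + q (m - j) * c j)|
      ≤ M * K * (α * v + 1) * ((m : ℝ) + 1) * v ^ m / (1 - σ / v) := by
  have hv : 0 < v := hσ.trans_lt hσv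
  have hy0 : 0 ≤ σ / v := div_nonneg hσ hv.le
  have hy1 : σ / v < 1 := (div_lt_one hv).mpr hσv
  calc _ ≤ ∑ j ∈ range (m + 1),
          M * K * (α * v + 1) * ((m : ℝ) + 1) * v ^ m * (σ / v) ^ (m - j) := by
        refine (abs_sum_le_sum_abs _ _).trans (sum_le_sum fun j hj => ?_)
        exact abs_recurrence_term_le hα hM hσ hv hK hp hq (Nat.lt_succ_iff.mp (mem_range.mp hj)) hc
    _ = M * K * (α * v + 1) * ((m : ℝ) + 1) * v ^ m * ∑ j ∈ range (m + 1), (σ / v) ^ j := by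
        rw [← mul_sum, ← sum_range_reflect (fun j => (σ / v) ^ j) (m + 1), Nat.add_sub_cancel]
    _ ≤ M * K * (α * v + 1) * ((m : ℝ) + 1) * v ^ m * (1 / (1 - σ / v)) := by
        refine mul_le_mul_of_nonneg_left ?_ (by positivity)
        simpa [← Finset.range_eq_Ico] using geom_sum_Ico_le_of_lt_one (m := 0) (n := m + 1) hy0 hy1
    _ = _ := mul_one_div _ _

lemma abs_le_of_recurrence (hα : 0 < α) (hM : 0 ≤ M) (hσ : 0 ≤ σ) (hσv : σ < v) (hK : 0 ≤ K)
    (hp : ∀ k, |p k| ≤ M * σ ^ k) (hq : ∀ k, |q k| ≤ M * σ ^ k)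
    (hcrec : ∀ k : ℕ, α ^ 2 * ((k : ℝ) + 2) * ((k : ℝ) + 1) * c (k + 2)
      = -∑ j ∈ range (k + 1), (α * ((j : ℝ) + 1) * p (k - j) * c (j + 1) + q (k - j) * c j))
    {m : ℕ} (hm : M * (α * v + 1) / (1 - σ / v) ≤ α ^ 2 * ((m : ℝ) + 2) * v ^ 2)
    (hc : ∀ i ≤ m + 1, |c i| ≤ K * v ^ i) :
    |c (m + 2)| ≤ K * v ^ (m + 2) := by
  have hv : 0 < v := hσ.trans_lt hσv
  have hA : 0 < α ^ 2 * ((m : ℝ) + 2) * ((m : ℝ) + 1) := by positivity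
  refine le_of_mul_le_mul_left ?_ hA
  calc α ^ 2 * ((m : ℝ) + 2) * ((m : ℝ) + 1) * |c (m + 2)|
      = |α ^ 2 * ((m : ℝ) + 2) * ((m : ℝ) + 1) * c (m + 2)| := by
        rw [abs_mul, abs_of_pos hA]
    _ ≤ M * K * (α * v + 1) * ((m : ℝ) + 1) * v ^ m / (1 - σ / v) := by
        rw [hcrec, abs_neg]
        exact abs_sum_recurrence_le hα hM hσ hσv hK hp hq hc
    _ = M * (α * v + 1) / (1 - σ / v) * (K * ((m : ℝ) + 1) * v ^ m) := by ring
    _ ≤ α ^ 2 * ((m : ℝ) + 2) * v ^ 2 * (K * ((m : ℝ) + 1) * v ^ m) := by gcongr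
    _ = α ^ 2 * ((m : ℝ) + 2) * ((m : ℝ) + 1) * (K * v ^ (m + 2)) := by ring

theorem exists_abs_le_mul_pow_of_recurrence (hα : 0 < α) (hM : 0 ≤ M) (hσ : 0 ≤ σ)
    (hσv : σ < v) (hp : ∀ k, |p k| ≤ M * σ ^ k) (hq : ∀ k, |q k| ≤ M * σ ^ k)
    (hcrec : ∀ k : ℕ, α ^ 2 * ((k : ℝ) + 2) * ((k : ℝ) + 1) * c (k + 2)
      = -∑ j ∈ range (k + 1), (α * ((j : ℝ) + 1) * p (k - j) * c (j + 1) + q (k - j) * c j)) :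
    ∃ K, ∀ k, |c k| ≤ K * v ^ k := by
  have hv : 0 < v := hσ.trans_lt hσv
  obtain ⟨N, hN⟩ := exists_nat_ge (M * (α * v + 1) / (1 - σ / v) / (α ^ 2 * v ^ 2))
  have hthreshold (m : ℕ) (hm : N ≤ m) :
      M * (α * v + 1) / (1 - σ / v) ≤ α ^ 2 * ((m : ℝ) + 2) * v ^ 2 := by
    rw [div_le_iff₀ (by positivity)] at hN
    have : (N : ℝ) ≤ m := by exact_mod_cast hm
    nlinarith [sq_nonneg (α * v)]
  set K := ∑ i ∈ range (N + 2), |c i| / v ^ i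
  have hK : 0 ≤ K := sum_nonneg fun i _ => by positivity
  have hinit (i : ℕ) (hi : i < N + 2) : |c i| ≤ K * v ^ i := by
    rw [← div_le_iff₀ (by positivity)]
    exact single_le_sum (f := fun i => |c i| / v ^ i) (fun i _ => by positivity) (mem_range.mpr hi)
  refine ⟨K, fun k => ?_⟩
  induction k using Nat.strong_induction_on with
  | _ k ih =>
    rcases lt_or_ge k (N + 2) with hk | hk
    · exact hinit k hk
    · obtain ⟨m, rfl⟩ : ∃ m, k = m + 2 := ⟨k - 2, by omega⟩
      exact abs_le_of_recurrence hα hM hσ hσv hK hp hq hcrec (hthreshold m (by omega))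
        fun i hi => ih i (by omega)

end Recurrence

lemma exists_abs_le_mul_pow_of_summable {a : ℕ → ℝ} {s : ℝ} (hs : 0 < s)
    (ha : Summable fun k => a k * s ^ k) : ∃ M, 0 ≤ M ∧ ∀ k, |a k| ≤ M * s⁻¹ ^ k := by
  obtain ⟨M, hM⟩ := ha.tendsto_atTop_zero.abs.bddAbove_range
  refine ⟨M, (abs_nonneg _).trans (hM ⟨0, rfl⟩), fun k => ?_⟩
  rw [inv_pow, ← div_eq_mul_inv, le_div_iff₀ (by positivity)]
  simpa [abs_mul, abs_of_pos (pow_pos hs k)] using hM ⟨k, rfl⟩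

theorem summable_mul_pow_of_recurrence {α s r : ℝ} {p q c : ℕ → ℝ} (hα : 0 < α)
    (hp : Summable fun k => p k * s ^ k) (hq : Summable fun k => q k * s ^ k)
    (hcrec : ∀ k : ℕ, α ^ 2 * ((k : ℝ) + 2) * ((k : ℝ) + 1) * c (k + 2)
      = -∑ j ∈ range (k + 1), (α * ((j : ℝ) + 1) * p (k - j) * c (j + 1) + q (k - j) * c j))
    (hr : |r| < s) : Summable fun k => c k * r ^ k := by
  have hs : 0 < s := (abs_nonneg r).trans_lt hr
  obtain ⟨Mp, hMp, hpM⟩ := exists_abs_le_mul_pow_of_summable hs hp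
  obtain ⟨Mq, hMq, hqM⟩ := exists_abs_le_mul_pow_of_summable hs hq
  obtain ⟨u, hru, hus⟩ := exists_between hr
  have hu : 0 < u := (abs_nonneg r).trans_lt hru
  have hσv : s⁻¹ < u⁻¹ := inv_strictAnti₀ hu hus
  obtain ⟨K, hK⟩ := exists_abs_le_mul_pow_of_recurrence hα (hMp.trans (le_max_left _ Mq))
    (by positivity) hσv (fun k => (hpM k).trans (by gcongr; exact le_max_left _ _))
    (fun k => (hqM k).trans (by gcongr; exact le_max_right _ _)) hcrec
  have hratio : |r| * u⁻¹ < 1 := by rwa [← div_eq_mul_inv, div_lt_one hu]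
  refine Summable.of_norm_bounded ((summable_geometric_of_lt_one (by positivity) hratio).mul_left K)
    fun k => ?_
  rw [Real.norm_eq_abs, abs_mul, abs_pow, mul_pow, ← mul_assoc, mul_right_comm]
  exact mul_le_mul_of_nonneg_right (hK k) (by positivity)

theorem stmt_3_general (α : ℝ) (hα : α ∈ Set.Ioc (0:ℝ) 1) (x₀ : ℝ)
    (p q : ℕ → ℝ) (δ₁ δ₂ : ℝ)
    (hp : ∀ t : ℝ, 0 ≤ t → t < δ₁ → Summable (fun k : ℕ => p k * t ^ ((k : ℝ) * α)))
    (hq : ∀ t : ℝ, 0 ≤ t → t < δ₂ → Summable (fun k : ℕ => q k * t ^ ((k : ℝ) * α)))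
    (c : ℕ → ℝ)
    (hcrec : ∀ k : ℕ, α ^ 2 * ((k : ℝ) + 2) * ((k : ℝ) + 1) * c (k + 2)
      = -∑ j ∈ Finset.range (k + 1),
          (α * ((j : ℝ) + 1) * p (k - j) * c (j + 1) + q (k - j) * c j)) :
    ∀ x : ℝ, x₀ < x → x < x₀ + min δ₁ δ₂ →
      Summable (fun k : ℕ => c k * (x - x₀) ^ ((k : ℝ) * α)) := by
  intro x hx₀ hx
  have hpow {t : ℝ} (ht : 0 ≤ t) (k : ℕ) : t ^ ((k : ℝ) * α) = (t ^ α) ^ k := by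
    rw [mul_comm, Real.rpow_mul_natCast ht]
  have ht : 0 < x - x₀ := sub_pos.mpr hx₀
  obtain ⟨τ, htτ, hτ⟩ := exists_between (show x - x₀ < min δ₁ δ₂ by linarith)
  have hτ₁ : τ < δ₁ := hτ.trans_le (min_le_left δ₁ δ₂)
  have hτ₂ : τ < δ₂ := hτ.trans_le (min_le_right δ₁ δ₂)
  simp only [hpow ht.le]
  refine summable_mul_pow_of_recurrence (s := τ ^ α) hα.1 ?_ ?_ hcrec ?_
  · simpa only [hpow (ht.trans htτ).le] using hp τ (ht.trans htτ).le hτ₁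
  · simpa only [hpow (ht.trans htτ).le] using hq τ (ht.trans htτ).le hτ₂
  · rw [abs_of_pos (by positivity)]
    exact Real.rpow_lt_rpow ht.le htτ hα.1

theorem stmt_3 (α : ℝ) (hα : α ∈ Set.Ioc (0:ℝ) 1) (x₀ : ℝ)
    (p q : ℕ → ℝ) (δ₁ δ₂ : ℝ) (hδ₁ : 0 < δ₁) (hδ₂ : 0 < δ₂)
    (hp : ∀ t : ℝ, 0 ≤ t → t < δ₁ → Summable (fun k : ℕ => p k * t ^ ((k : ℝ) * α)))
    (hq : ∀ t : ℝ, 0 ≤ t → t < δ₂ → Summable (fun k : ℕ => q k * t ^ ((k : ℝ) * α)))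
    (c : ℕ → ℝ)
    (hcrec : ∀ k : ℕ, α ^ 2 * ((k : ℝ) + 2) * ((k : ℝ) + 1) * c (k + 2)
      = -∑ j ∈ Finset.range (k + 1),
          (α * ((j : ℝ) + 1) * p (k - j) * c (j + 1) + q (k - j) * c j)) :
    ∀ x : ℝ, x₀ < x → x < x₀ + min δ₁ δ₂ →
      Summable (fun k : ℕ => c k * (x - x₀) ^ ((k : ℝ) * α)) :=
  stmt_3_general α hα x₀ p q δ₁ δ₂ hp hq c hcrec
end

section
/- Let α ∈ (0,1] and let (c_k) be a real sequence such that y(x) = ∑_{k=0}^{∞} c_k x^{kα} converges on an interval (0, R) with R > 0 and satisfies T_α T_α y − x^{α} T_α y − y = 0 on (0, R). Then 2α² c₂ = c₀ and α²(k+1)(k+2) c_{k+2} = (kα + 1) c_k for every k ≥ 1. -/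
/-!
Substituting `t = x ^ α` turns `y` into the power series `g t = ∑ c k * t ^ k`, and `T_α` acts on
functions of `x ^ α` as `α • d/dt`, because `x ^ (1 - α)` cancels the chain-rule factor
`α * x ^ (α - 1)`. The equation therefore becomes `α² g'' - α t g' - g = 0` on an interval
`(0, ε)`. The left side is a power series vanishing on `(0, ε)`, so by the isolated zeros
principle all its coefficients `α² (n + 1) (n + 2) c (n + 2) - (n α + 1) c n` vanish.
-/

open FormalMultilinearSeries Filter Set Topology
open scoped ENNReal

section PowerSeries

variable {𝕜 : Type*} [NontriviallyNormedField 𝕜] {f : 𝕜 → 𝕜} {a : ℕ → 𝕜}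
  {r : ℝ≥0∞}

theorem FormalMultilinearSeries.enorm_le_radius_ofScalars_of_summable {z : 𝕜}
    (h : Summable fun n ↦ a n * z ^ n) : ‖z‖ₑ ≤ (ofScalars 𝕜 a).radius := by
  refine (ofScalars 𝕜 a).le_radius_of_tendsto (r := ‖z‖₊) (l := 0) ?_
  simpa [ofScalars_norm, norm_mul, norm_pow] using h.tendsto_atTop_zero.norm

theorem FormalMultilinearSeries.analyticAt_ofScalarsSum [CompleteSpace 𝕜] {z : 𝕜}
    (hz : ‖z‖ₑ < (ofScalars 𝕜 a).radius) : AnalyticAt 𝕜 (ofScalarsSum a) z :=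
  ((ofScalars 𝕜 a).hasFPowerSeriesOnBall (pos_of_gt hz)).analyticAt_of_mem
    (mem_eball_zero_iff.mpr hz)

theorem HasFPowerSeriesOnBall.hasSum_mul_pow (h : HasFPowerSeriesOnBall f (ofScalars 𝕜 a) 0 r)
    {t : 𝕜} (ht : ‖t‖ₑ < r) : HasSum (fun n ↦ a n * t ^ n) (f t) := by
  simpa [ofScalars_apply_eq, mul_comm] using h.hasSum (mem_eball_zero_iff.mpr ht)

theorem HasFPowerSeriesOnBall.deriv_ofScalars [CompleteSpace 𝕜]
    (h : HasFPowerSeriesOnBall f (ofScalars 𝕜 a) 0 r) :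
    HasFPowerSeriesOnBall (deriv f) (ofScalars 𝕜 fun n ↦ (n + 1) * a (n + 1)) 0 r := by
  have hd := (ContinuousLinearMap.apply 𝕜 𝕜 (1 : 𝕜)).comp_hasFPowerSeriesOnBall h.fderiv
  convert hd using 1
  · ext x; simp
  · ext n : 1
    rw [← mkPiRing_coeff_eq (ofScalars 𝕜 _)]
    conv_rhs => rw [← mkPiRing_coeff_eq (ContinuousLinearMap.compFormalMultilinearSeries _ _)]
    congr 1
    rw [coeff_ofScalars, coeff, ContinuousLinearMap.compFormalMultilinearSeries_apply,
      ContinuousLinearMap.compContinuousMultilinearMap_coe, Function.comp_apply,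
      ContinuousLinearMap.apply_apply, ← coeff, derivSeries_coeff_one, coeff_ofScalars,
      nsmul_eq_mul]
    push_cast; ring

theorem hasSum_mul_pow_of_hasSum_succ {t s : 𝕜} (h : HasSum (fun n ↦ a (n + 1) * t ^ n) s) :
    HasSum (fun n ↦ a n * t ^ n) (a 0 + t * s) := by
  have h' : HasSum (fun n ↦ a (n + 1) * t ^ (n + 1)) (t * s) :=
    (h.mul_left t).congr_fun fun n ↦ by ring
  rw [← hasSum_nat_add_iff' 1]
  simpa using h'

end PowerSeries

theorem enorm_lt_radius_of_mem_Ioo {p : FormalMultilinearSeries ℝ ℝ ℝ} {ε t : ℝ}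
    (hε : ‖ε‖ₑ ≤ p.radius) (ht : t ∈ Ioo 0 ε) : ‖t‖ₑ < p.radius := by
  refine lt_of_lt_of_le ?_ hε
  simpa [Real.enorm_eq_ofReal_abs, abs_of_pos ht.1, abs_of_pos (ht.1.trans ht.2)] using
    (ENNReal.ofReal_lt_ofReal_iff (ht.1.trans ht.2)).mpr ht.2

theorem eq_zero_of_hasSum_mul_pow_eq_zero_on_Ioo {d : ℕ → ℝ} {ε : ℝ} (hε : 0 < ε)
    (h : ∀ t ∈ Ioo 0 ε, HasSum (fun n ↦ d n * t ^ n) 0) : d = 0 := by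
  set p := ofScalars ℝ d
  have hrad : 0 < p.radius := lt_of_lt_of_le (by simpa using hε.ne')
    (enorm_le_radius_ofScalars_of_summable (h _ ⟨half_pos hε, half_lt_self hε⟩).summable)
  have hp : HasFPowerSeriesAt p.sum p 0 := (p.hasFPowerSeriesOnBall hrad).hasFPowerSeriesAt
  have hfreq : ∃ᶠ t in 𝓝[≠] 0, p.sum t = 0 := by
    refine Frequently.filter_mono (Eventually.frequently ?_) (nhdsGT_le_nhdsNE 0)
    filter_upwards [Ioo_mem_nhdsGT hε] with t ht
    simpa [p, FormalMultilinearSeries.sum, ofScalars_apply_eq, mul_comm] using (h t ht).tsum_eq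
  have hzero : p.sum =ᶠ[𝓝 0] 0 := hp.analyticAt.frequently_zero_iff_eventually_zero.mp hfreq
  exact (ofScalars_series_eq_zero ℝ).mp (hp.congr hzero).eq_zero

theorem ofScalarsSum_coeff_recurrence_of_ode {α ε : ℝ} {c : ℕ → ℝ} (hε : 0 < ε)
    (hrad : ‖ε‖ₑ ≤ (ofScalars ℝ c).radius)
    (hode : ∀ t ∈ Ioo 0 ε, α ^ 2 * deriv (deriv (ofScalarsSum c)) t
      - α * (t * deriv (ofScalarsSum c) t) - ofScalarsSum c t = 0) (n : ℕ) :
    α ^ 2 * ((n + 1) * (n + 2) * c (n + 2)) = (n * α + 1) * c n := by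
  have hg : HasFPowerSeriesOnBall (ofScalarsSum c) (ofScalars ℝ c) 0 (ofScalars ℝ c).radius :=
    (ofScalars ℝ c).hasFPowerSeriesOnBall
      (pos_of_gt (enorm_lt_radius_of_mem_Ioo hrad ⟨half_pos hε, half_lt_self hε⟩))
  have hg' := hg.deriv_ofScalars
  have hg'' := hg'.deriv_ofScalars
  have hd : (fun n : ℕ ↦ α ^ 2 * ((n + 1) * (n + 2) * c (n + 2)) - (n * α + 1) * c n) = 0 :=
    eq_zero_of_hasSum_mul_pow_eq_zero_on_Ioo hε fun t ht ↦ by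
      have hball := enorm_lt_radius_of_mem_Ioo hrad ht
      have h0 := hg.hasSum_mul_pow hball
      have h1 := hasSum_mul_pow_of_hasSum_succ (a := fun n ↦ (n : ℝ) * c n)
        (by simpa using hg'.hasSum_mul_pow hball)
      have h2 := hg''.hasSum_mul_pow hball
      have hsum := ((h2.mul_left (α ^ 2)).sub (h1.mul_left α)).sub h0
      rw [Nat.cast_zero, zero_mul, zero_add, hode t ht] at hsum
      exact hsum.congr_fun fun n ↦ by push_cast; ring
  exact sub_eq_zero.mp (congrFun hd n)

noncomputable def conformableDeriv (α : ℝ) (f : ℝ → ℝ) (x : ℝ) : ℝ :=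
  x ^ (1 - α) * deriv f x

theorem conformableDeriv_comp_rpow {α x : ℝ} {g : ℝ → ℝ} (hx : 0 < x)
    (hg : DifferentiableAt ℝ g (x ^ α)) :
    conformableDeriv α (fun u ↦ g (u ^ α)) x = α * deriv g (x ^ α) := by
  have hcomp := hg.hasDerivAt.comp x (Real.hasDerivAt_rpow_const (p := α) (Or.inl hx.ne'))
  have hcancel : x ^ (1 - α) * x ^ (α - 1) = 1 := by
    rw [← Real.rpow_add hx]; norm_num
  rw [conformableDeriv, show (fun u ↦ g (u ^ α)) = g ∘ fun u ↦ u ^ α from rfl, hcomp.deriv]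
  linear_combination α * deriv g (x ^ α) * hcancel

theorem eqOn_conformableDeriv_of_eqOn_comp_rpow {α : ℝ} {f g : ℝ → ℝ} {s : Set ℝ}
    (hs : IsOpen s) (hs₀ : s ⊆ Ioi 0) (hfg : EqOn f (fun u ↦ g (u ^ α)) s)
    (hg : ∀ x ∈ s, DifferentiableAt ℝ g (x ^ α)) :
    EqOn (conformableDeriv α f) (fun u ↦ α * deriv g (u ^ α)) s := by
  intro x hx
  rw [conformableDeriv, (hfg.eventuallyEq_of_mem (hs.mem_nhds hx)).deriv_eq]
  exact conformableDeriv_comp_rpow (hs₀ hx) (hg x hx)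

theorem ode_of_conformableDeriv_ode_comp_rpow {α x₀ : ℝ} {y g : ℝ → ℝ} (hα : 0 < α)
    (hx₀ : 0 ≤ x₀) (hyg : EqOn y (fun u ↦ g (u ^ α)) (Ioo 0 x₀))
    (hg : ∀ t ∈ Ioo 0 (x₀ ^ α), AnalyticAt ℝ g t)
    (hy : ∀ x ∈ Ioo 0 x₀,
      conformableDeriv α (conformableDeriv α y) x - x ^ α * conformableDeriv α y x - y x = 0) :
    ∀ t ∈ Ioo 0 (x₀ ^ α), α ^ 2 * deriv (deriv g) t - α * (t * deriv g t) - g t = 0 := by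
  have hmaps : MapsTo (· ^ α) (Ioo 0 x₀) (Ioo 0 (x₀ ^ α)) := fun u hu ↦
    ⟨Real.rpow_pos_of_pos hu.1 α, Real.rpow_lt_rpow hu.1.le hu.2 hα⟩
  have hTy : EqOn (conformableDeriv α y) (fun u ↦ α * deriv g (u ^ α)) (Ioo 0 x₀) :=
    eqOn_conformableDeriv_of_eqOn_comp_rpow isOpen_Ioo Ioo_subset_Ioi_self hyg
      fun u hu ↦ (hg _ (hmaps hu)).differentiableAt
  have hTTy : EqOn (conformableDeriv α (conformableDeriv α y))
      (fun u ↦ α * deriv (fun t ↦ α * deriv g t) (u ^ α)) (Ioo 0 x₀) :=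
    eqOn_conformableDeriv_of_eqOn_comp_rpow isOpen_Ioo Ioo_subset_Ioi_self hTy
      fun u hu ↦ (hg _ (hmaps hu)).deriv.differentiableAt.const_mul α
  intro t ht
  have hut : (t ^ α⁻¹) ^ α = t := Real.rpow_inv_rpow ht.1.le hα.ne'
  have hu : t ^ α⁻¹ ∈ Ioo 0 x₀ := ⟨Real.rpow_pos_of_pos ht.1 _, by
    rw [← Real.rpow_lt_rpow_iff (Real.rpow_pos_of_pos ht.1 _).le hx₀ hα, hut]
    exact ht.2⟩
  have h := hy _ hu
  simp only [hTTy hu, hTy hu, hyg hu, hut, deriv_const_mul_field'] at h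
  linear_combination h

theorem tsum_mul_rpow_eq_ofScalarsSum (c : ℕ → ℝ) (α : ℝ) {u : ℝ} (hu : 0 ≤ u) :
    ∑' k : ℕ, c k * u ^ ((k : ℝ) * α) = ofScalarsSum c (u ^ α) := by
  rw [ofScalars_sum_eq]
  exact tsum_congr fun k ↦ by rw [smul_eq_mul, mul_comm (k : ℝ), Real.rpow_mul_natCast hu]

theorem stmt_5 (α : ℝ) (hα : α ∈ Set.Ioc (0:ℝ) 1) (c : ℕ → ℝ) (R : ℝ) (hR : 0 < R)
    (hconv : ∀ x : ℝ, 0 < x → x < R → Summable (fun k : ℕ => c k * x ^ ((k : ℝ) * α)))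
    (y : ℝ → ℝ) (hy : y = fun x => ∑' k : ℕ, c k * x ^ ((k : ℝ) * α))
    (T : (ℝ → ℝ) → (ℝ → ℝ)) (hT : T = fun f x => x ^ (1 - α) * deriv f x)
    (heq : ∀ x : ℝ, 0 < x → x < R → T (T y) x - x ^ α * T y x - y x = 0) :
    2 * α ^ 2 * c 2 = c 0 ∧
      ∀ k : ℕ, 1 ≤ k →
        α ^ 2 * ((k : ℝ) + 1) * ((k : ℝ) + 2) * c (k + 2) = ((k : ℝ) * α + 1) * c k := by
  obtain ⟨hα₀, -⟩ := hα
  rw [show T = conformableDeriv α from hT] at heq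
  set x₀ := R / 2
  have hx₀ : x₀ ∈ Ioo 0 R := ⟨half_pos hR, half_lt_self hR⟩
  have hrad : ‖x₀ ^ α‖ₑ ≤ (ofScalars ℝ c).radius :=
    enorm_le_radius_ofScalars_of_summable <| (hconv x₀ hx₀.1 hx₀.2).congr fun k ↦ by
      rw [mul_comm (k : ℝ), Real.rpow_mul_natCast hx₀.1.le]
  have hode := ode_of_conformableDeriv_ode_comp_rpow hα₀ hx₀.1.le
    (fun u hu ↦ by simp only [hy, tsum_mul_rpow_eq_ofScalarsSum c α hu.1.le])
    (fun t ht ↦ analyticAt_ofScalarsSum (enorm_lt_radius_of_mem_Ioo hrad ht))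
    (fun x hx ↦ heq x hx.1 (hx.2.trans hx₀.2))
  have hrec := ofScalarsSum_coeff_recurrence_of_ode (Real.rpow_pos_of_pos hx₀.1 α) hrad hode
  exact ⟨by linear_combination hrec 0, fun k _ ↦ by linear_combination hrec k⟩
end

section
/- Let j ∈ ℕ, α = 1/(2j+1), and let m, n ≥ 0 be integers with m ≠ n. Then ∫_{−∞}^{∞} H_m^α(x) H_n^α(x) e^{−x^{2α}} |x|^{α−1} dx = 0. -/
/-!
Substituting `x = u ^ (2j+1)` turns the conformable measure `|x| ^ (α - 1) dx` into
`(2j+1) du` and `H_m (x ^ α)` into `H_m u`, so the integral is `2j+1` times the classical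
integral `∫ H_m H_n e^{-u²} du`. For `m < n` this vanishes: writing `H_n` through the raising
operator `q ↦ 2Xq - q'`, the adjoint of differentiation for the weight `e^{-u²}`, and integrating
by parts `n` times moves `n` derivatives onto `H_m`, which has degree `m`.
-/

open MeasureTheory

/-- The physicists' Hermite polynomials, as real functions:
`H₀ = 1`, `H₁ x = 2 x`, `H_{m+1} x = 2 x * H_m x - 2 m * H_{m-1} x`. -/
noncomputable def hermiteP : ℕ → ℝ → ℝ
  | 0, _ => 1
  | 1, x => 2 * x
  | (m + 2), x => 2 * x * hermiteP (m + 1) x - 2 * ((m : ℝ) + 1) * hermiteP m x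

/-- The real `α`-th power for `α = 1/(2j+1)`, interpreted via the real odd root:
`sign x * |x| ^ α`. -/
noncomputable def oddRoot (α x : ℝ) : ℝ := Real.sign x * |x| ^ α

open Polynomial Real

noncomputable def hermitePoly : ℕ → ℝ[X]
  | 0 => 1
  | n + 1 => 2 * X * hermitePoly n - derivative (hermitePoly n)

theorem derivative_hermitePoly_succ (n : ℕ) :
    derivative (hermitePoly (n + 1)) = 2 * ((n : ℝ[X]) + 1) * hermitePoly n := by
  induction n with
  | zero => simp [hermitePoly]
  | succ n ih =>
    have h : hermitePoly (n + 1) = 2 * X * hermitePoly n - derivative (hermitePoly n) := rfl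
    rw [hermitePoly, derivative_sub]
    simp only [derivative_mul, derivative_X, derivative_ofNat, derivative_add, derivative_natCast,
      derivative_one, ih]
    push_cast
    linear_combination (-2 * ((n : ℝ[X]) + 1)) * h

theorem hermitePoly_succ_succ (n : ℕ) :
    hermitePoly (n + 2) = 2 * X * hermitePoly (n + 1) - 2 * ((n : ℝ[X]) + 1) * hermitePoly n := by
  rw [hermitePoly, derivative_hermitePoly_succ]

theorem hermiteP_eq_eval (n : ℕ) (x : ℝ) : hermiteP n x = (hermitePoly n).eval x := by
  induction n using Nat.twoStepInduction with
  | zero => simp [hermiteP, hermitePoly]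
  | one => simp [hermiteP, hermitePoly]
  | more n ih₀ ih₁ => simp [hermiteP, hermitePoly_succ_succ, ih₀, ih₁]

theorem natDegree_hermitePoly_le (n : ℕ) : (hermitePoly n).natDegree ≤ n := by
  induction n with
  | zero => simp [hermitePoly]
  | succ n ih =>
    refine (natDegree_sub_le _ _).trans (max_le ?_ ?_)
    · exact (natDegree_mul_le_of_le (by compute_degree!) ih).trans_eq (add_comm _ _)
    · exact (natDegree_derivative_le _).trans (by omega)

theorem integrable_eval_mul_exp_neg_sq (p : ℝ[X]) :
    Integrable fun x => p.eval x * exp (-x ^ 2) := by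
  induction p using Polynomial.induction_on' with
  | monomial n c =>
    have h := integrable_rpow_mul_exp_neg_mul_sq (b := 1) one_pos
      (neg_one_lt_zero.trans_le n.cast_nonneg)
    simp only [rpow_natCast, neg_one_mul] at h
    simpa [mul_assoc] using h.const_mul c
  | add p q hp hq => exact (hp.add hq).congr (.of_forall fun x => by simp [add_mul])

theorem hasDerivAt_eval_mul_exp_neg_sq (p : ℝ[X]) (x : ℝ) :
    HasDerivAt (fun x => p.eval x * exp (-x ^ 2))
      (-(2 * X * p - derivative p).eval x * exp (-x ^ 2)) x := by
  have hexp : HasDerivAt (fun x => exp (-x ^ 2)) (exp (-x ^ 2) * -(2 * x)) x := by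
    simpa using (hasDerivAt_pow 2 x).neg.exp
  refine ((p.hasDerivAt x).mul hexp).congr_deriv ?_
  simp only [eval_sub, eval_mul, eval_ofNat, eval_X]
  ring

theorem integral_eval_mul_raise_mul_exp_neg_sq (p q : ℝ[X]) :
    ∫ x, p.eval x * (2 * X * q - derivative q).eval x * exp (-x ^ 2) =
      ∫ x, (derivative p).eval x * q.eval x * exp (-x ^ 2) := by
  have integrable_of_eq (r : ℝ[X]) {f : ℝ → ℝ} (hf : ∀ x, r.eval x * exp (-x ^ 2) = f x) :
      Integrable f :=
    (integrable_eval_mul_exp_neg_sq r).congr (.of_forall hf)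
  have h := integral_mul_deriv_eq_deriv_mul_of_integrable (fun x _ => p.hasDerivAt x)
    (fun x _ => hasDerivAt_eval_mul_exp_neg_sq q x)
    (integrable_of_eq (-(p * (2 * X * q - derivative q))) fun x => by
      simp only [eval_neg, eval_mul, eval_sub, eval_ofNat, eval_X, Pi.mul_apply]; ring)
    (integrable_of_eq (derivative p * q) fun x => by simp only [eval_mul, Pi.mul_apply]; ring)
    (integrable_of_eq (p * q) fun x => by simp only [eval_mul, Pi.mul_apply]; ring)
  simp only [mul_neg, neg_mul, integral_neg, neg_inj] at h
  simpa only [mul_assoc] using h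

theorem integral_eval_mul_hermitePoly_mul_exp_neg_sq (p : ℝ[X]) (n : ℕ) :
    ∫ x, p.eval x * (hermitePoly n).eval x * exp (-x ^ 2) =
      ∫ x, (derivative^[n] p).eval x * exp (-x ^ 2) := by
  induction n generalizing p with
  | zero => simp [hermitePoly]
  | succ n ih =>
    rw [hermitePoly, integral_eval_mul_raise_mul_exp_neg_sq, ih, Function.iterate_succ_apply]

theorem integral_hermitePoly_mul_hermitePoly_mul_exp_neg_sq_of_lt {m n : ℕ} (hmn : m < n) :
    ∫ x, (hermitePoly m).eval x * (hermitePoly n).eval x * exp (-x ^ 2) = 0 := by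
  rw [integral_eval_mul_hermitePoly_mul_exp_neg_sq,
    iterate_derivative_eq_zero ((natDegree_hermitePoly_le m).trans_lt hmn)]
  simp

theorem integral_hermiteP_mul_hermiteP_mul_exp_neg_sq {m n : ℕ} (hmn : m ≠ n) :
    ∫ x, hermiteP m x * hermiteP n x * exp (-x ^ 2) = 0 := by
  simp only [hermiteP_eq_eval]
  rcases hmn.lt_or_gt with h | h
  · exact integral_hermitePoly_mul_hermitePoly_mul_exp_neg_sq_of_lt h
  · simpa only [mul_comm ((hermitePoly m).eval _)] using
      integral_hermitePoly_mul_hermitePoly_mul_exp_neg_sq_of_lt h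

theorem Real.sign_pow_of_odd {k : ℕ} (hk : Odd k) (x : ℝ) : sign x ^ k = sign x := by
  rcases sign_apply_eq x with h | h | h <;> simp [h, hk.neg_one_pow, hk.pos.ne']

theorem Real.sign_mul_abs (x : ℝ) : sign x * |x| = x := by
  rcases lt_trichotomy x 0 with h | rfl | h
  · simp [sign_of_neg h, abs_of_neg h]
  · simp
  · simp [sign_of_pos h, abs_of_pos h]

theorem pow_oddRoot {k : ℕ} (hk : Odd k) (x : ℝ) : oddRoot (k : ℝ)⁻¹ x ^ k = x := by
  rw [oddRoot, mul_pow, Real.sign_pow_of_odd hk, rpow_inv_natCast_pow (abs_nonneg x) hk.pos.ne',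
    Real.sign_mul_abs]

theorem oddRoot_pow {k : ℕ} (hk : Odd k) (u : ℝ) : oddRoot (k : ℝ)⁻¹ (u ^ k) = u :=
  hk.strictMono_pow.injective (pow_oddRoot hk (u ^ k))

theorem oddRoot_sq {α : ℝ} (hα : α ≠ 0) (x : ℝ) : oddRoot α x ^ 2 = |x| ^ (2 * α) := by
  rcases eq_or_ne x 0 with rfl | hx
  · simp [oddRoot, hα]
  · rcases sign_apply_eq_of_ne_zero x hx with h | h <;>
      simp [oddRoot, h, ← rpow_mul_natCast (abs_nonneg x), mul_comm]

theorem integral_comp_pow_of_odd {k : ℕ} (hk : Odd k) (g : ℝ → ℝ) :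
    ∫ x, g x = ∫ u, k * |u| ^ (k - 1) * g (u ^ k) := by
  have hsurj : Function.Surjective fun u : ℝ => u ^ k := fun x => ⟨_, pow_oddRoot hk x⟩
  have h := integral_image_eq_integral_abs_deriv_smul MeasurableSet.univ
    (fun u _ => (hasDerivAt_pow k u).hasDerivWithinAt) hk.strictMono_pow.injective.injOn g
  rw [Set.image_univ, hsurj.range_eq, setIntegral_univ, setIntegral_univ] at h
  simpa [abs_mul, abs_pow] using h

theorem integral_comp_oddRoot_mul_abs_rpow {k : ℕ} (hk : Odd k) (g : ℝ → ℝ) :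
    ∫ x, g (oddRoot (k : ℝ)⁻¹ x) * |x| ^ ((k : ℝ)⁻¹ - 1) = k * ∫ u, g u := by
  rw [integral_comp_pow_of_odd hk, ← integral_const_mul]
  refine integral_congr_ae ((Measure.ae_ne volume 0).mono fun u hu => ?_)
  have hu' : 0 < |u| := abs_pos.2 hu
  have hjac : |u| ^ (k - 1) * |u ^ k| ^ ((k : ℝ)⁻¹ - 1) = 1 := by
    have hk0 : (k : ℝ) ≠ 0 := by exact_mod_cast hk.pos.ne'
    rw [abs_pow, ← rpow_natCast, ← rpow_natCast_mul hu'.le, ← rpow_add hu',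
      Nat.cast_sub hk.pos]
    convert rpow_zero |u| using 2
    field_simp
    ring
  dsimp only
  rw [oddRoot_pow hk]
  linear_combination (k * g u) * hjac

theorem stmt_14 (j : ℕ) (α : ℝ) (hα : α = 1 / (2 * (j : ℝ) + 1))
    (m n : ℕ) (hmn : m ≠ n) :
    ∫ x : ℝ, hermiteP m (oddRoot α x) * hermiteP n (oddRoot α x) *
        Real.exp (-(|x| ^ (2 * α))) * |x| ^ (α - 1) = 0 := by
  have hk : Odd (2 * j + 1) := odd_two_mul_add_one j
  obtain rfl : α = ((2 * j + 1 : ℕ) : ℝ)⁻¹ := by rw [hα, one_div]; push_cast; rfl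
  simp_rw [← oddRoot_sq (inv_ne_zero (Nat.cast_ne_zero.2 hk.pos.ne'))]
  rw [integral_comp_oddRoot_mul_abs_rpow hk fun u => hermiteP m u * hermiteP n u * exp (-u ^ 2),
    integral_hermiteP_mul_hermiteP_mul_exp_neg_sq hmn, mul_zero]
end

section
/- Let j ∈ ℕ, α = 1/(2j+1), and let n ≥ 0 be an integer. Then ∫_{−∞}^{∞} (H_n^α(x))² e^{−x^{2α}} |x|^{α−1} dx = 2^n n! √π / α. -/
open MeasureTheory

/-!
Since `u ↦ H_n(u)² e^{-u²}` is even, the sign carried by the odd root is irrelevant, and the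
substitution `u = |x|^α` turns the integral into `α⁻¹ ∫ H_n(u)² e^{-u²} du`. This is the
classical norm `2ⁿ n! √π`: integrating by parts with `(H_n e^{-u²})' = -H_{n+1} e^{-u²}` and
`H_{n+1}' = 2(n+1) H_n` gives `‖H_{n+1}‖² = 2(n+1) ‖H_n‖²`, and the Gaussian integral
starts the induction. The boundary terms vanish and everything is integrable because
`|H_n(u)| ≤ C e^{n|u|}`.
-/

open Real Filter Topology Set
open scoped Nat

@[simp] lemma hermiteP_zero (x : ℝ) : hermiteP 0 x = 1 := rfl

@[simp] lemma hermiteP_one (x : ℝ) : hermiteP 1 x = 2 * x := rfl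

lemma hermiteP_add_two (m : ℕ) (x : ℝ) :
    hermiteP (m + 2) x = 2 * x * hermiteP (m + 1) x - 2 * ((m : ℝ) + 1) * hermiteP m x := rfl

lemma hermiteP_succ (n : ℕ) (x : ℝ) :
    hermiteP (n + 1) x = 2 * x * hermiteP n x - 2 * n * hermiteP (n - 1) x := by
  cases n with
  | zero => simp
  | succ m => rw [hermiteP_add_two]; push_cast; ring_nf

lemma hermiteP_neg : ∀ (n : ℕ) (x : ℝ), hermiteP n (-x) = (-1) ^ n * hermiteP n x
  | 0, _ => by simp
  | 1, _ => by simp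
  | m + 2, x => by
    rw [hermiteP_add_two, hermiteP_add_two, hermiteP_neg (m + 1), hermiteP_neg m]
    ring

lemma even_hermiteP_sq_mul_exp_neg_sq (n : ℕ) :
    Function.Even fun x => hermiteP n x ^ 2 * exp (-x ^ 2) := fun x => by
  dsimp only
  rw [hermiteP_neg, mul_pow, ← pow_mul, pow_mul', neg_one_sq, one_pow, one_mul, neg_sq]

lemma hasDerivAt_hermiteP : ∀ (n : ℕ) (x : ℝ),
    HasDerivAt (hermiteP n) (2 * n * hermiteP (n - 1) x) x
  | 0, x => by
    rw [show hermiteP 0 = fun _ => 1 from funext hermiteP_zero]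
    simpa using hasDerivAt_const x (1 : ℝ)
  | m + 1, x => by
    rw [show hermiteP (m + 1) = fun y => 2 * y * hermiteP m y - 2 * m * hermiteP (m - 1) y
      from funext (hermiteP_succ m)]
    refine ((((hasDerivAt_id' x).const_mul 2).mul (hasDerivAt_hermiteP m x)).sub
      ((hasDerivAt_hermiteP (m - 1) x).const_mul _)).congr_deriv ?_
    cases m with
    | zero => simp
    | succ k => simp only [Nat.add_sub_cancel]; rw [hermiteP_succ k]; push_cast; ring

lemma continuous_hermiteP (n : ℕ) : Continuous (hermiteP n) :=
  continuous_iff_continuousAt.2 fun x => (hasDerivAt_hermiteP n x).continuousAt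

lemma hasDerivAt_hermiteP_mul_exp_neg_sq (n : ℕ) (x : ℝ) :
    HasDerivAt (fun y => hermiteP n y * exp (-y ^ 2))
      (-(hermiteP (n + 1) x * exp (-x ^ 2))) x := by
  have hexp : HasDerivAt (fun y : ℝ => exp (-y ^ 2)) (-(2 * x) * exp (-x ^ 2)) x := by
    simpa [mul_comm] using ((hasDerivAt_pow 2 x).neg).exp
  refine ((hasDerivAt_hermiteP n x).mul hexp).congr_deriv ?_
  rw [hermiteP_succ]; ring

lemma abs_hermiteP_le_mul_exp : ∀ n : ℕ, ∃ C, ∀ x, |hermiteP n x| ≤ C * exp (n * |x|)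
  | 0 => ⟨1, fun x => by simp⟩
  | 1 => ⟨2, fun x => by
      simpa [abs_mul] using (add_one_le_exp |x|).trans' (le_add_of_nonneg_right zero_le_one)⟩
  | m + 2 => by
    obtain ⟨C₁, h₁⟩ := abs_hermiteP_le_mul_exp (m + 1)
    obtain ⟨C₀, h₀⟩ := abs_hermiteP_le_mul_exp m
    have hC₁ : 0 ≤ C₁ := by simpa using (abs_nonneg _).trans (h₁ 0)
    have hC₀ : 0 ≤ C₀ := by simpa using (abs_nonneg _).trans (h₀ 0)
    refine ⟨2 * C₁ + 2 * (m + 1) * C₀, fun x => ?_⟩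
    have hlin : |x| * exp ((m + 1) * |x|) ≤ exp ((m + 2) * |x|) :=
      calc |x| * exp ((m + 1) * |x|) ≤ exp |x| * exp ((m + 1) * |x|) := by
            gcongr; linarith [add_one_le_exp |x|]
        _ = exp ((m + 2) * |x|) := by rw [← exp_add]; ring_nf
    have hmono : exp (m * |x|) ≤ exp ((m + 2) * |x|) := by
      gcongr; linarith [abs_nonneg x]
    calc |hermiteP (m + 2) x|
        ≤ 2 * |x| * |hermiteP (m + 1) x| + 2 * (m + 1) * |hermiteP m x| := by
          rw [hermiteP_add_two]
          refine (abs_sub _ _).trans_eq ?_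
          have hcoef : (0 : ℝ) ≤ 2 * (m + 1) := by positivity
          rw [abs_mul, abs_mul, abs_mul, abs_two, abs_of_nonneg hcoef]
      _ ≤ 2 * |x| * (C₁ * exp ((m + 1) * |x|)) + 2 * (m + 1) * (C₀ * exp (m * |x|)) := by
          gcongr
          · simpa using h₁ x
          · exact h₀ x
      _ = 2 * C₁ * (|x| * exp ((m + 1) * |x|)) + 2 * (m + 1) * C₀ * exp (m * |x|) := by ring
      _ ≤ 2 * C₁ * exp ((m + 2) * |x|) + 2 * (m + 1) * C₀ * exp ((m + 2) * |x|) := by gcongr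
      _ = (2 * C₁ + 2 * (m + 1) * C₀) * exp (((m + 2 : ℕ) : ℝ) * |x|) := by push_cast; ring

lemma abs_hermiteP_mul_hermiteP_mul_exp_neg_sq_le (a b : ℕ) :
    ∃ K, ∀ x, |hermiteP a x * hermiteP b x * exp (-x ^ 2)| ≤ K * exp (-(1 / 2) * x ^ 2) := by
  obtain ⟨Ca, ha⟩ := abs_hermiteP_le_mul_exp a
  obtain ⟨Cb, hb⟩ := abs_hermiteP_le_mul_exp b
  set m : ℝ := a + b
  have hCa : 0 ≤ Ca := by simpa using (abs_nonneg _).trans (ha 0)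
  have hCb : 0 ≤ Cb := by simpa using (abs_nonneg _).trans (hb 0)
  refine ⟨Ca * Cb * exp (m ^ 2 / 2), fun x => ?_⟩
  -- `m |x| - x² ≤ m² / 2 - x² / 2` is `(|x| - m)² ≥ 0`
  have hexponent : a * |x| + b * |x| + -x ^ 2 ≤ m ^ 2 / 2 + -(1 / 2) * x ^ 2 := by
    nlinarith [sq_nonneg (|x| - m), sq_abs x]
  calc |hermiteP a x * hermiteP b x * exp (-x ^ 2)|
      = |hermiteP a x| * |hermiteP b x| * exp (-x ^ 2) := by
        rw [abs_mul, abs_mul, abs_of_pos (exp_pos _)]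
    _ ≤ (Ca * exp (a * |x|)) * (Cb * exp (b * |x|)) * exp (-x ^ 2) := by
        gcongr
        · exact ha x
        · exact hb x
    _ = Ca * Cb * exp (a * |x| + b * |x| + -x ^ 2) := by rw [exp_add, exp_add]; ring
    _ ≤ Ca * Cb * exp (m ^ 2 / 2 + -(1 / 2) * x ^ 2) := by gcongr
    _ = Ca * Cb * exp (m ^ 2 / 2) * exp (-(1 / 2) * x ^ 2) := by rw [exp_add]; ring

lemma integrable_hermiteP_mul_hermiteP_mul_exp_neg_sq (a b : ℕ) :
    Integrable (fun x => hermiteP a x * hermiteP b x * exp (-x ^ 2)) := by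
  obtain ⟨K, hK⟩ := abs_hermiteP_mul_hermiteP_mul_exp_neg_sq_le a b
  refine ((integrable_exp_neg_mul_sq (by norm_num : (0 : ℝ) < 1 / 2)).const_mul K).mono' ?_
    (Eventually.of_forall hK)
  exact (((continuous_hermiteP a).mul (continuous_hermiteP b)).mul
    (continuous_exp.comp (continuous_pow 2).neg)).aestronglyMeasurable

lemma tendsto_hermiteP_mul_hermiteP_mul_exp_neg_sq_cocompact (a b : ℕ) :
    Tendsto (fun x => hermiteP a x * hermiteP b x * exp (-x ^ 2)) (cocompact ℝ) (𝓝 0) := by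
  obtain ⟨K, hK⟩ := abs_hermiteP_mul_hermiteP_mul_exp_neg_sq_le a b
  have hgauss := (tendsto_rpow_abs_mul_exp_neg_mul_sq_cocompact (by norm_num : (0 : ℝ) < 1 / 2)
    0).const_mul K
  simp only [rpow_zero, one_mul, mul_zero] at hgauss
  exact squeeze_zero_norm (fun x => (hK x).trans_eq (by ring_nf)) hgauss

theorem integral_hermiteP_sq_mul_exp_neg_sq (n : ℕ) :
    ∫ x, hermiteP n x ^ 2 * exp (-x ^ 2) = 2 ^ n * n ! * √π := by
  induction n with
  | zero => simpa using integral_gaussian 1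
  | succ n ih =>
    have hparts := integral_mul_deriv_eq_deriv_mul (a' := 0) (b' := 0)
      (fun x _ => hasDerivAt_hermiteP (n + 1) x)
      (fun x _ => hasDerivAt_hermiteP_mul_exp_neg_sq n x)
      (by convert (integrable_hermiteP_mul_hermiteP_mul_exp_neg_sq (n + 1) (n + 1)).neg using 1
          funext x; simp only [Pi.mul_apply, Pi.neg_apply]; ring)
      (by convert (integrable_hermiteP_mul_hermiteP_mul_exp_neg_sq n n).const_mul (2 * (n + 1))
            using 1
          funext x
          simp only [Nat.cast_add, Nat.cast_one, add_tsub_cancel_right, Pi.mul_apply]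
          ring)
      (by convert (tendsto_hermiteP_mul_hermiteP_mul_exp_neg_sq_cocompact (n + 1) n).mono_left
            atBot_le_cocompact using 1
          funext x; simp only [Pi.mul_apply]; ring)
      (by convert (tendsto_hermiteP_mul_hermiteP_mul_exp_neg_sq_cocompact (n + 1) n).mono_left
            atTop_le_cocompact using 1
          funext x; simp only [Pi.mul_apply]; ring)
    simp only [Nat.add_sub_cancel, mul_neg, integral_neg, zero_sub, sub_zero, neg_inj] at hparts
    calc ∫ x, hermiteP (n + 1) x ^ 2 * exp (-x ^ 2)
        = ∫ x, hermiteP (n + 1) x * (hermiteP (n + 1) x * exp (-x ^ 2)) := by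
          congr 1; funext x; ring
      _ = ∫ x, 2 * ((n + 1 : ℕ) : ℝ) * hermiteP n x * (hermiteP n x * exp (-x ^ 2)) := hparts
      _ = 2 * (n + 1) * ∫ x, hermiteP n x ^ 2 * exp (-x ^ 2) := by
          rw [← integral_const_mul]; congr 1; funext x; push_cast; ring
      _ = 2 ^ (n + 1) * (n + 1)! * √π := by
          rw [ih, Nat.factorial_succ]; push_cast; ring

lemma abs_oddRoot {α : ℝ} (hα : α ≠ 0) (x : ℝ) : |oddRoot α x| = |x| ^ α := by
  rcases lt_trichotomy x 0 with hx | rfl | hx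
  · rw [oddRoot, sign_of_neg hx, neg_one_mul, abs_neg, abs_of_nonneg (by positivity)]
  · simp [oddRoot, zero_rpow hα]
  · rw [oddRoot, sign_of_pos hx, one_mul, abs_of_nonneg (by positivity)]

theorem integral_comp_oddRoot_mul_abs_rpow_s15 {f : ℝ → ℝ} (hf : Function.Even f) {α : ℝ}
    (hα : α ≠ 0) : ∫ x, f (oddRoot α x) * |x| ^ (α - 1) = |α|⁻¹ * ∫ x, f x := by
  have hf_abs : ∀ y, f |y| = f y := fun y => by
    rcases abs_choice y with h | h <;> rw [h]
    exact hf y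
  have hhalf : ∫ x in Ioi 0, f x = 2⁻¹ * ∫ x, f x := by
    have := integral_comp_abs (f := f)
    simp only [hf_abs] at this
    linarith
  calc ∫ x, f (oddRoot α x) * |x| ^ (α - 1)
      = ∫ x, f (|x| ^ α) * |x| ^ (α - 1) := by
        congr 1; funext x; rw [← hf_abs, abs_oddRoot hα]
    _ = 2 * ∫ t in Ioi 0, f (t ^ α) * t ^ (α - 1) :=
        integral_comp_abs (f := fun t => f (t ^ α) * t ^ (α - 1))
    _ = 2 * (|α|⁻¹ * ∫ t in Ioi 0, (|α| * t ^ (α - 1)) • f (t ^ α)) := by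
        rw [← integral_const_mul |α|⁻¹]
        congr 2; funext t
        rw [smul_eq_mul]
        field_simp [abs_ne_zero.2 hα]
    _ = |α|⁻¹ * ∫ x, f x := by
        rw [integral_comp_rpow_Ioi f hα, hhalf]; ring

theorem stmt_15 (j : ℕ) (α : ℝ) (hα : α = 1 / (2 * (j : ℝ) + 1)) (n : ℕ) :
    ∫ x : ℝ, (hermiteP n (oddRoot α x)) ^ 2 *
        Real.exp (-(|x| ^ (2 * α))) * |x| ^ (α - 1)
      = 2 ^ n * (Nat.factorial n : ℝ) * Real.sqrt Real.pi / α := by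
  have hα₀ : 0 < α := hα ▸ by positivity
  have hsq (x : ℝ) : |x| ^ (2 * α) = oddRoot α x ^ 2 := by
    rw [← sq_abs, abs_oddRoot hα₀.ne', ← rpow_natCast, ← rpow_mul (abs_nonneg x), mul_comm]
    norm_num
  simp_rw [hsq]
  rw [integral_comp_oddRoot_mul_abs_rpow_s15 (even_hermiteP_sq_mul_exp_neg_sq n) hα₀.ne',
    integral_hermiteP_sq_mul_exp_neg_sq, abs_of_pos hα₀, div_eq_inv_mul]
end
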